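/- The indicator 1-chains {1_{∂p} : p a plaquette} of the L² plaquette boundaries are linearly independent over 𝔽₂ and their 𝔽₂-linear span is exactly the set 𝒵 of 1-cycles of the L×L square lattice; i.e., each plaquette contributes one independent 1-cycle and together they generate the whole cycle space. -/

import Mathlib

open Finset

/-- Edges of the L×L square lattice: `horiz i j` is the edge from (i,j) to (i+1,j),
`vert i j` is the edge from (i,j) to (i,j+1). -/
inductive Edge (L : ℕ) where
  | horiz : Fin L → Fin (L+1) → Edge L
  | vert  : Fin (L+1) → Fin L → Edge L
deriving DecidableEq, Fintype

/-- Vertices of the L×L square lattice. -/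
abbrev Vertex (L : ℕ) := Fin (L+1) × Fin (L+1)

/-- The two endpoints of an edge. -/
def Edge.ends {L : ℕ} : Edge L → Vertex L × Vertex L
  | .horiz i j => ((i.castSucc, j), (i.succ, j))
  | .vert i j  => ((i, j.castSucc), (i, j.succ))

/-- A vertex is incident to an edge iff it is one of its endpoints. -/
def Incident {L : ℕ} (s : Vertex L) (e : Edge L) : Prop :=
  s = e.ends.1 ∨ s = e.ends.2

instance {L : ℕ} (s : Vertex L) (e : Edge L) : Decidable (Incident s e) := by
  unfold Incident; infer_instance

/-- The star δs: the set of edges incident to a vertex s. -/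
def star {L : ℕ} (s : Vertex L) : Finset (Edge L) :=
  Finset.univ.filter (fun e => Incident s e)

/-- The boundary ∂p of the plaquette p = (i,j): the four edges of the unit square
with corners (i,j), (i+1,j), (i,j+1), (i+1,j+1). -/
def pBoundary {L : ℕ} (p : Fin L × Fin L) : Finset (Edge L) :=
  {Edge.horiz p.1 p.2.castSucc, Edge.horiz p.1 p.2.succ,
   Edge.vert p.1.castSucc p.2, Edge.vert p.1.succ p.2}


/-- A 1-chain x : E(𝓛) → ZMod 2 is a 1-cycle iff ∑_{e ∈ δs} x_e = 0 for every vertex s. -/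
def IsCycle {L : ℕ} (x : Edge L → ZMod 2) : Prop :=
  ∀ s : Vertex L, ∑ e ∈ star s, x e = 0

/-- The indicator 1-chain of the boundary ∂p of a plaquette p. -/
def pChain {L : ℕ} (p : Fin L × Fin L) : Edge L → ZMod 2 :=
  fun e => if e ∈ pBoundary p then 1 else 0

namespace Aux

variable {L : ℕ}

lemma z2 (t : ZMod 2) : t + t = 0 := by revert t; decide

lemma ends_ne (e : Edge L) : e.ends.1 ≠ e.ends.2 := by
  cases e <;> simp [Edge.ends, Prod.ext_iff, Fin.ext_iff]

def edgeEquiv (L : ℕ) : Edge L ≃ (Fin L × Fin (L+1)) ⊕ (Fin (L+1) × Fin L) where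
  toFun e := match e with
    | .horiz i j => .inl (i, j)
    | .vert i j => .inr (i, j)
  invFun z := match z with
    | .inl (i, j) => .horiz i j
    | .inr (i, j) => .vert i j
  left_inv e := by cases e <;> rfl
  right_inv z := by rcases z with ⟨i,j⟩|⟨i,j⟩ <;> rfl

lemma sum_edge (f : Edge L → ZMod 2) :
    ∑ e : Edge L, f e
      = (∑ i : Fin L, ∑ j : Fin (L+1), f (.horiz i j))
        + (∑ i : Fin (L+1), ∑ j : Fin L, f (.vert i j)) := by
  rw [← Equiv.sum_comp (edgeEquiv L).symm f, Fintype.sum_sum_type]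
  simp [edgeEquiv, Fintype.sum_prod_type]

lemma star_sum (x : Edge L → ZMod 2) (s : Vertex L) :
    ∑ e ∈ star s, x e
      = ∑ e : Edge L, ((if s = e.ends.1 then x e else 0) + (if s = e.ends.2 then x e else 0)) := by
  rw [_root_.star, Finset.sum_filter]
  refine Finset.sum_congr rfl fun e _ => ?_
  have hne := ends_ne e
  unfold Incident
  by_cases h1 : s = e.ends.1
  · have h2 : s ≠ e.ends.2 := fun h2 => hne (h1.symm.trans h2)
    rw [if_pos h1, if_neg h2, add_zero]; exact if_pos (Or.inl h1)
  · by_cases h2 : s = e.ends.2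
    · rw [if_neg h1, if_pos h2, zero_add]; exact if_pos (Or.inr h2)
    · rw [if_neg h1, if_neg h2, add_zero]; exact if_neg (by tauto)

lemma double_count (x : Edge L → ZMod 2) (hx : IsCycle x) (S : Finset (Vertex L)) :
    ∑ e : Edge L, ((if e.ends.1 ∈ S then x e else 0) + (if e.ends.2 ∈ S then x e else 0)) = 0 := by
  calc ∑ e : Edge L, ((if e.ends.1 ∈ S then x e else 0) + (if e.ends.2 ∈ S then x e else 0))
      = ∑ e : Edge L, ∑ s ∈ S, ((if s = e.ends.1 then x e else 0) + (if s = e.ends.2 then x e else 0)) := by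
        refine Finset.sum_congr rfl fun e _ => ?_
        rw [Finset.sum_add_distrib, Finset.sum_ite_eq' S e.ends.1 (fun _ => x e),
          Finset.sum_ite_eq' S e.ends.2 (fun _ => x e)]
    _ = ∑ s ∈ S, ∑ e : Edge L, ((if s = e.ends.1 then x e else 0) + (if s = e.ends.2 then x e else 0)) :=
        Finset.sum_comm
    _ = ∑ s ∈ S, ∑ e ∈ _root_.star s, x e := by
        refine Finset.sum_congr rfl fun s _ => (star_sum x s).symm
    _ = 0 := Finset.sum_eq_zero fun s _ => hx s


lemma col_sum (x : Edge L → ZMod 2) (hx : IsCycle x) (a : Fin L) :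
    ∑ j : Fin (L+1), x (.horiz a j) = 0 := by
  have h := double_count x hx (Finset.univ.filter (fun v => v.1.val ≤ a.val))
  rw [sum_edge] at h
  simp only [Edge.ends, Finset.mem_filter, Finset.mem_univ, true_and, Fin.coe_castSucc,
    Fin.val_succ] at h
  have hv : (∑ i : Fin (L+1), ∑ j : Fin L,
      ((if i.val ≤ a.val then x (.vert i j) else 0) + (if i.val ≤ a.val then x (.vert i j) else 0))) = 0 :=
    Finset.sum_eq_zero fun i _ => Finset.sum_eq_zero fun j _ => z2 _
  have hh : ∀ (i : Fin L) (j : Fin (L+1)),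
      ((if i.val ≤ a.val then x (.horiz i j) else 0) + (if i.val + 1 ≤ a.val then x (.horiz i j) else 0))
      = (if i = a then x (.horiz i j) else 0) := by
    intro i j
    rcases lt_trichotomy i.val a.val with h' | h' | h'
    · rw [if_pos h'.le, if_pos (by omega : i.val + 1 ≤ a.val), if_neg (by simp [Fin.ext_iff]; omega), z2]
    · rw [if_pos h'.le, if_neg (by omega), if_pos (Fin.ext h'), add_zero]
    · rw [if_neg (by omega), if_neg (by omega), if_neg (by simp [Fin.ext_iff]; omega), add_zero]
  rw [hv, add_zero] at h
  calc ∑ j : Fin (L+1), x (.horiz a j)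
      = ∑ i : Fin L, (if i = a then ∑ j : Fin (L+1), x (.horiz i j) else 0) := by
        rw [Finset.sum_ite_eq' Finset.univ a (fun i => ∑ j : Fin (L+1), x (.horiz i j)),
          if_pos (Finset.mem_univ a)]
    _ = ∑ i : Fin L, ∑ j : Fin (L+1), (if i = a then x (.horiz i j) else 0) := by
        refine Finset.sum_congr rfl fun i _ => ?_
        split <;> simp
    _ = ∑ i : Fin L, ∑ j : Fin (L+1),
          ((if i.val ≤ a.val then x (.horiz i j) else 0) + (if i.val + 1 ≤ a.val then x (.horiz i j) else 0)) :=
        Finset.sum_congr rfl fun i _ => Finset.sum_congr rfl fun j _ => (hh i j).symm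
    _ = 0 := h


lemma z2' (u v : ZMod 2) (h : u + v = 0) : v = u := by revert h; revert u v; decide

lemma sum_sum_ite_left {α β : Type*} [Fintype α] [Fintype β] [DecidableEq α]
    (f : α → β → ZMod 2) (P : β → Prop) [DecidablePred P] (a : α) :
    ∑ i : α, ∑ j : β, (if (i = a ∧ P j) then f i j else 0) = ∑ j : β, (if P j then f a j else 0) := by
  have key : ∀ i, ∑ j : β, (if (i = a ∧ P j) then f i j else 0)
      = if i = a then (∑ j : β, (if P j then f i j else 0)) else 0 := by
    intro i; by_cases hi : i = a <;> simp [hi]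
  rw [Finset.sum_congr rfl fun i _ => key i,
    Finset.sum_ite_eq' Finset.univ a (fun i => ∑ j : β, (if P j then f i j else 0)),
    if_pos (Finset.mem_univ a)]

/-- partial column sum of horizontal edges -/
def csum (x : Edge L → ZMod 2) (i : Fin L) (b : Fin L) : ZMod 2 :=
  ∑ k : Fin (L+1), (if k.val ≤ b.val then x (.horiz i k) else 0)

lemma vert_eq (x : Edge L → ZMod 2) (hx : IsCycle x) (a : Fin (L+1)) (b : Fin L) :
    x (.vert a b)
      = (if h : a.val < L then csum x ⟨a.val, h⟩ b else 0)
        + (if h : 0 < a.val then csum x ⟨a.val - 1, by have := a.isLt; omega⟩ b else 0) := by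
  have h := double_count x hx (Finset.univ.filter (fun v => v.1 = a ∧ v.2.val ≤ b.val))
  rw [sum_edge] at h
  simp only [Edge.ends, Finset.mem_filter, Finset.mem_univ, true_and, Fin.coe_castSucc,
    Fin.val_succ] at h
  -- vertical part equals x (.vert a b)
  have hvert : ∀ (i : Fin (L+1)) (m : Fin L),
      ((if (i = a ∧ m.val ≤ b.val) then x (.vert i m) else 0)
        + (if (i = a ∧ m.val + 1 ≤ b.val) then x (.vert i m) else 0))
      = (if (i = a ∧ m = b) then x (.vert i m) else 0) := by
    intro i m
    by_cases hi : i = a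
    · rcases lt_trichotomy m.val b.val with h' | h' | h'
      · rw [if_pos ⟨hi, h'.le⟩, if_pos ⟨hi, by omega⟩, if_neg (by simp [Fin.ext_iff]; omega), z2]
      · rw [if_pos ⟨hi, h'.le⟩, if_neg (by omega), if_pos ⟨hi, Fin.ext h'⟩, add_zero]
      · rw [if_neg (by omega), if_neg (by omega), if_neg (by simp [Fin.ext_iff]; omega), add_zero]
    · simp [hi]
  have hV : (∑ i : Fin (L+1), ∑ m : Fin L,
      ((if (i = a ∧ m.val ≤ b.val) then x (.vert i m) else 0)
        + (if (i = a ∧ m.val + 1 ≤ b.val) then x (.vert i m) else 0))) = x (.vert a b) := by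
    rw [Finset.sum_congr rfl fun i _ => Finset.sum_congr rfl fun m _ => hvert i m]
    have := sum_sum_ite_left (fun (i : Fin (L+1)) (m : Fin L) => x (.vert i m)) (· = b) a
    rw [this]
    simp
  -- horizontal part splits in two
  have hH1 : (∑ i : Fin L, ∑ k : Fin (L+1),
      (if (i.castSucc = a ∧ k.val ≤ b.val) then x (.horiz i k) else 0))
      = (if h : a.val < L then csum x ⟨a.val, h⟩ b else 0) := by
    by_cases ha : a.val < L
    · rw [dif_pos ha]
      have cong : ∀ (i : Fin L) (k : Fin (L+1)),
          (if (i.castSucc = a ∧ k.val ≤ b.val) then x (.horiz i k) else 0)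
          = (if (i = (⟨a.val, ha⟩ : Fin L) ∧ k.val ≤ b.val) then x (.horiz i k) else 0) := by
        intro i k
        refine if_congr (and_congr_left fun _ => ?_) rfl rfl
        constructor
        · intro hc; exact Fin.ext (by simpa [Fin.ext_iff] using hc)
        · intro hc; subst hc; exact Fin.ext rfl
      rw [Finset.sum_congr rfl fun i _ => Finset.sum_congr rfl fun k _ => cong i k,
        sum_sum_ite_left (fun i k => x (.horiz i k)) (fun k => k.val ≤ b.val) ⟨a.val, ha⟩]
      rfl
    · rw [dif_neg ha]
      refine Finset.sum_eq_zero fun i _ => Finset.sum_eq_zero fun k _ => ?_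
      rw [if_neg]
      rintro ⟨hc, -⟩
      have : i.val = a.val := by simpa [Fin.ext_iff] using hc
      omega
  have hH2 : (∑ i : Fin L, ∑ k : Fin (L+1),
      (if (i.succ = a ∧ k.val ≤ b.val) then x (.horiz i k) else 0))
      = (if h : 0 < a.val then csum x ⟨a.val - 1, by have := a.isLt; omega⟩ b else 0) := by
    by_cases ha : 0 < a.val
    · rw [dif_pos ha]
      have haL : a.val - 1 < L := by have := a.isLt; omega
      have cong : ∀ (i : Fin L) (k : Fin (L+1)),
          (if (i.succ = a ∧ k.val ≤ b.val) then x (.horiz i k) else 0)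
          = (if (i = (⟨a.val - 1, haL⟩ : Fin L) ∧ k.val ≤ b.val) then x (.horiz i k) else 0) := by
        intro i k
        refine if_congr (and_congr_left fun _ => ?_) rfl rfl
        constructor
        · intro hc
          have : i.val + 1 = a.val := by simpa [Fin.ext_iff] using hc
          exact Fin.ext (show i.val = a.val - 1 by omega)
        · intro hc
          have : i.val = a.val - 1 := by simpa [Fin.ext_iff] using hc
          exact Fin.ext (show i.val + 1 = a.val by omega)
      rw [Finset.sum_congr rfl fun i _ => Finset.sum_congr rfl fun k _ => cong i k,
        sum_sum_ite_left (fun i k => x (.horiz i k)) (fun k => k.val ≤ b.val) ⟨a.val - 1, haL⟩]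
      rfl
    · rw [dif_neg ha]
      refine Finset.sum_eq_zero fun i _ => Finset.sum_eq_zero fun k _ => ?_
      rw [if_neg]
      rintro ⟨hc, -⟩
      have : i.val + 1 = a.val := by simpa [Fin.ext_iff] using hc
      omega
  -- combine
  have hsplit : (∑ i : Fin L, ∑ k : Fin (L+1),
      ((if (i.castSucc = a ∧ k.val ≤ b.val) then x (.horiz i k) else 0)
        + (if (i.succ = a ∧ k.val ≤ b.val) then x (.horiz i k) else 0)))
      = (∑ i : Fin L, ∑ k : Fin (L+1), (if (i.castSucc = a ∧ k.val ≤ b.val) then x (.horiz i k) else 0))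
        + (∑ i : Fin L, ∑ k : Fin (L+1), (if (i.succ = a ∧ k.val ≤ b.val) then x (.horiz i k) else 0)) := by
    simp [Finset.sum_add_distrib]
  rw [hsplit, hH1, hH2, hV] at h
  exact z2' _ _ h


lemma mem_pBoundary_horiz {p : Fin L × Fin L} {a : Fin L} {b : Fin (L+1)} :
    Edge.horiz a b ∈ pBoundary p ↔ (p.1 = a ∧ (b = p.2.castSucc ∨ b = p.2.succ)) := by
  simp only [pBoundary, Finset.mem_insert, Finset.mem_singleton]
  constructor
  · rintro (h | h | h | h) <;> simp_all <;> tauto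
  · rintro ⟨h1, h2 | h2⟩ <;> subst h1 <;> subst h2 <;> tauto

lemma mem_pBoundary_vert {p : Fin L × Fin L} {a : Fin (L+1)} {b : Fin L} :
    Edge.vert a b ∈ pBoundary p ↔ ((a = p.1.castSucc ∨ a = p.1.succ) ∧ p.2 = b) := by
  simp only [pBoundary, Finset.mem_insert, Finset.mem_singleton]
  constructor
  · rintro (h | h | h | h) <;> simp_all <;> tauto
  · rintro ⟨h1 | h1, h2⟩ <;> subst h2 <;> subst h1 <;> tauto

lemma sum_sum_ite_right {α β : Type*} [Fintype α] [Fintype β] [DecidableEq β]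
    (f : α → β → ZMod 2) (P : α → Prop) [DecidablePred P] (b : β) :
    ∑ i : α, ∑ j : β, (if (P i ∧ j = b) then f i j else 0) = ∑ i : α, (if P i then f i b else 0) := by
  refine Finset.sum_congr rfl fun i _ => ?_
  by_cases hi : P i <;> simp [hi]

lemma sum_pred (f : Fin L → ZMod 2) (b : Fin (L+1)) :
    ∑ q : Fin L, (if (b = q.castSucc ∨ b = q.succ) then f q else 0)
      = (if h : b.val < L then f ⟨b.val, h⟩ else 0)
        + (if h : 0 < b.val then f ⟨b.val - 1, by have := b.isLt; omega⟩ else 0) := by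
  have split : ∀ q : Fin L, (if (b = q.castSucc ∨ b = q.succ) then f q else 0)
      = (if b = q.castSucc then f q else 0) + (if b = q.succ then f q else 0) := by
    intro q
    by_cases h1 : b = q.castSucc
    · have h2 : b ≠ q.succ := by rw [h1]; simp [Fin.ext_iff]
      rw [if_pos (Or.inl h1), if_pos h1, if_neg h2, add_zero]
    · by_cases h2 : b = q.succ
      · rw [if_pos (Or.inr h2), if_neg h1, if_pos h2, zero_add]
      · rw [if_neg (by tauto), if_neg h1, if_neg h2, add_zero]
  rw [Finset.sum_congr rfl fun q _ => split q, Finset.sum_add_distrib]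
  congr 1
  · by_cases h : b.val < L
    · rw [dif_pos h]
      have cong : ∀ q : Fin L, (if b = q.castSucc then f q else 0)
          = (if q = (⟨b.val, h⟩ : Fin L) then f q else 0) := by
        intro q
        refine if_congr ?_ rfl rfl
        simp [Fin.ext_iff]; omega
      rw [Finset.sum_congr rfl fun q _ => cong q, Finset.sum_ite_eq' Finset.univ _ f,
        if_pos (Finset.mem_univ _)]
    · rw [dif_neg h]
      refine Finset.sum_eq_zero fun q _ => if_neg fun hc => ?_
      have h1 : b.val = q.val := by simpa [Fin.ext_iff] using hc
      have := q.isLt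
      omega
  · by_cases h : 0 < b.val
    · rw [dif_pos h]
      have hbL : b.val - 1 < L := by have := b.isLt; omega
      have cong : ∀ q : Fin L, (if b = q.succ then f q else 0)
          = (if q = (⟨b.val - 1, hbL⟩ : Fin L) then f q else 0) := by
        intro q
        refine if_congr ?_ rfl rfl
        simp [Fin.ext_iff]; omega
      rw [Finset.sum_congr rfl fun q _ => cong q, Finset.sum_ite_eq' Finset.univ _ f,
        if_pos (Finset.mem_univ _)]
    · rw [dif_neg h]
      refine Finset.sum_eq_zero fun q _ => if_neg fun hc => ?_
      have h1 : b.val = q.val + 1 := by simpa [Fin.ext_iff] using hc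
      omega

lemma eval_sum (g : Fin L × Fin L → ZMod 2) (e : Edge L) :
    (∑ p : Fin L × Fin L, g p • pChain p) e
      = ∑ p : Fin L × Fin L, (if e ∈ pBoundary p then g p else 0) := by
  rw [Finset.sum_apply]
  refine Finset.sum_congr rfl fun p _ => ?_
  simp only [Pi.smul_apply, pChain, smul_eq_mul]
  split <;> simp

lemma eval_horiz (g : Fin L × Fin L → ZMod 2) (a : Fin L) (b : Fin (L+1)) :
    (∑ p : Fin L × Fin L, (if Edge.horiz a b ∈ pBoundary p then g p else 0))
      = (if h : b.val < L then g (a, ⟨b.val, h⟩) else 0)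
        + (if h : 0 < b.val then g (a, ⟨b.val - 1, by have := b.isLt; omega⟩) else 0) := by
  simp only [mem_pBoundary_horiz]
  rw [Fintype.sum_prod_type]
  rw [sum_sum_ite_left (fun i j => g (i, j)) (fun q => b = q.castSucc ∨ b = q.succ) a]
  exact sum_pred (fun q => g (a, q)) b

lemma eval_vert (g : Fin L × Fin L → ZMod 2) (a : Fin (L+1)) (b : Fin L) :
    (∑ p : Fin L × Fin L, (if Edge.vert a b ∈ pBoundary p then g p else 0))
      = (if h : a.val < L then g (⟨a.val, h⟩, b) else 0)
        + (if h : 0 < a.val then g (⟨a.val - 1, by have := a.isLt; omega⟩, b) else 0) := by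
  simp only [mem_pBoundary_vert]
  rw [Fintype.sum_prod_type]
  rw [sum_sum_ite_right (fun i j => g (i, j)) (fun q => a = q.castSucc ∨ a = q.succ) b]
  exact sum_pred (fun q => g (q, b)) a


lemma pChain_isCycle (p : Fin L × Fin L) : IsCycle (pChain p) := by
  intro s
  have step1 : ∑ e ∈ _root_.star s, pChain p e
      = ∑ e : Edge L, (if (Incident s e ∧ e ∈ pBoundary p) then (1 : ZMod 2) else 0) := by
    rw [_root_.star, Finset.sum_filter]
    refine Finset.sum_congr rfl fun e _ => ?_
    by_cases h1 : Incident s e <;> by_cases h2 : e ∈ pBoundary p <;>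
      simp [h1, h2, pChain]
  have step2 : ∑ e : Edge L, (if (Incident s e ∧ e ∈ pBoundary p) then (1 : ZMod 2) else 0)
      = ∑ e ∈ pBoundary p, (if Incident s e then (1 : ZMod 2) else 0) := by
    rw [← Finset.filter_univ_mem (pBoundary p), Finset.sum_filter]
    refine Finset.sum_congr rfl fun e _ => ?_
    by_cases h1 : Incident s e <;> by_cases h2 : e ∈ pBoundary p <;> simp [h1, h2]
  rw [step1, step2]
  obtain ⟨i, j⟩ := p
  obtain ⟨a, c⟩ := s
  have d1 : (Edge.horiz i j.castSucc : Edge L) ∉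
      ({Edge.horiz i j.succ, Edge.vert i.castSucc j, Edge.vert i.succ j} : Finset (Edge L)) := by
    simp [Fin.ext_iff]
  have d2 : (Edge.horiz i j.succ : Edge L) ∉
      ({Edge.vert i.castSucc j, Edge.vert i.succ j} : Finset (Edge L)) := by
    simp
  have d3 : (Edge.vert i.castSucc j : Edge L) ∉ ({Edge.vert i.succ j} : Finset (Edge L)) := by
    simp [Fin.ext_iff]
  rw [show pBoundary (i, j) = {Edge.horiz i j.castSucc, Edge.horiz i j.succ,
      Edge.vert i.castSucc j, Edge.vert i.succ j} from rfl,
    Finset.sum_insert d1, Finset.sum_insert d2, Finset.sum_insert d3, Finset.sum_singleton]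
  simp only [Incident, Edge.ends, Prod.mk.injEq, Fin.ext_iff, Fin.coe_castSucc, Fin.val_succ]
  by_cases h1 : a.val = i.val <;> by_cases h2 : a.val = i.val + 1 <;>
    by_cases h3 : c.val = j.val <;> by_cases h4 : c.val = j.val + 1 <;>
    simp [h1, h2, h3, h4, Nat.left_eq_add, Nat.succ_ne_self] <;>
    first | decide | omega

def cycleSubmodule (L : ℕ) : Submodule (ZMod 2) (Edge L → ZMod 2) where
  carrier := {x | IsCycle x}
  add_mem' := by
    intro x y hx hy s
    simp only [Pi.add_apply]
    rw [Finset.sum_add_distrib, hx s, hy s, add_zero]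
  zero_mem' := by intro s; simp
  smul_mem' := by
    intro c x hx s
    simp only [Pi.smul_apply, smul_eq_mul]
    rw [← Finset.mul_sum, hx s, mul_zero]


lemma csum_val (x : Edge L → ZMod 2) (a : Fin L) (m : ℕ) (h : m < L) :
    csum x a ⟨m, h⟩ = ∑ k : Fin (L+1), (if k.val ≤ m then x (.horiz a k) else 0) := rfl

lemma repr (x : Edge L → ZMod 2) (hx : IsCycle x) :
    x = ∑ p : Fin L × Fin L, (csum x p.1 p.2) • pChain p := by
  funext e
  rw [eval_sum (fun p => csum x p.1 p.2) e]
  cases e with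
  | horiz a b =>
    rw [eval_horiz]
    by_cases hb : b.val < L
    · rw [dif_pos hb]
      by_cases hb0 : 0 < b.val
      · rw [dif_pos hb0]
        have key : ∀ k : Fin (L+1),
            ((if k.val ≤ b.val then x (.horiz a k) else 0)
              + (if k.val ≤ b.val - 1 then x (.horiz a k) else 0))
            = (if k = b then x (.horiz a k) else 0) := by
          intro k
          rcases lt_trichotomy k.val b.val with h' | h' | h'
          · rw [if_pos h'.le, if_pos (by omega), if_neg (by simp [Fin.ext_iff]; omega), z2]
          · rw [if_pos h'.le, if_neg (by omega), if_pos (Fin.ext h'), add_zero]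
          · rw [if_neg (by omega), if_neg (by omega), if_neg (by simp [Fin.ext_iff]; omega),
              add_zero]
        rw [csum_val, csum_val, ← Finset.sum_add_distrib,
          Finset.sum_congr rfl fun k _ => key k,
          Finset.sum_ite_eq' Finset.univ b (fun k => x (.horiz a k)),
          if_pos (Finset.mem_univ b)]
      · rw [dif_neg hb0, add_zero, csum_val]
        have key : ∀ k : Fin (L+1), (if k.val ≤ b.val then x (.horiz a k) else 0)
            = (if k = b then x (.horiz a k) else 0) := fun k =>
          if_congr (by simp [Fin.ext_iff]; omega) rfl rfl
        rw [Finset.sum_congr rfl fun k _ => key k,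
          Finset.sum_ite_eq' Finset.univ b (fun k => x (.horiz a k)),
          if_pos (Finset.mem_univ b)]
    · have hb' : b.val = L := by have := b.isLt; omega
      rw [dif_neg hb, dif_pos (show 0 < b.val by have := a.pos; omega), zero_add, csum_val]
      have haL : 0 < L := a.pos
      have hcol := col_sum x hx a
      have hx' : x (.horiz a b) = ∑ k : Fin (L+1), (if k = b then x (.horiz a k) else 0) := by
        rw [Finset.sum_ite_eq' Finset.univ b (fun k => x (.horiz a k)), if_pos (Finset.mem_univ b)]
      have expand : ∑ k : Fin (L+1), x (.horiz a k)
          = (∑ k : Fin (L+1), (if k.val ≤ b.val - 1 then x (.horiz a k) else 0))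
            + x (.horiz a b) := by
        rw [hx', ← Finset.sum_add_distrib]
        refine Finset.sum_congr rfl fun k _ => ?_
        by_cases hk : k.val ≤ b.val - 1
        · rw [if_pos hk, if_neg (show ¬(k = b) by simp only [Fin.ext_iff]; omega), add_zero]
        · rw [if_neg hk, if_pos (Fin.ext (show k.val = b.val by have := k.isLt; omega)), zero_add]
      rw [expand] at hcol
      exact z2' _ _ hcol
  | vert a b =>
    rw [eval_vert]
    exact vert_eq x hx a b

end Aux


/-- the indicator 1-chains of the L² plaquette boundaries are linearly
independent over 𝔽₂ and their span is exactly the cycle space 𝒵 of the L×L lattice. -/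
theorem plaquette_chains_independent_and_span_cycles (L : ℕ) (hL : 1 ≤ L) :
    LinearIndependent (ZMod 2) (fun p : Fin L × Fin L => pChain p) ∧
    (Submodule.span (ZMod 2) (Set.range (fun p : Fin L × Fin L => pChain p)) : Set (Edge L → ZMod 2))
      = {x : Edge L → ZMod 2 | IsCycle x} := by
  constructor
  · rw [Fintype.linearIndependent_iff]
    intro g hg
    have key : ∀ n : ℕ, ∀ i j : Fin L, j.val = n → g (i, j) = 0 := by
      intro n
      induction n using Nat.strong_induction_on with
      | _ n ih =>
        intro i j hj
        have h0 : (∑ p : Fin L × Fin L, g p • pChain p) (Edge.horiz i j.castSucc) = 0 := by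
          rw [hg]; rfl
        rw [Aux.eval_sum, Aux.eval_horiz] at h0
        simp only [Fin.coe_castSucc] at h0
        rw [dif_pos j.isLt] at h0
        by_cases h1 : 0 < j.val
        · rw [dif_pos h1] at h0
          have h2 := ih (j.val - 1) (by omega) i ⟨j.val - 1, by have := j.isLt; omega⟩ rfl
          rw [h2, add_zero] at h0
          simpa using h0
        · rw [dif_neg h1, add_zero] at h0
          simpa using h0
    intro p
    exact key p.2.val p.1 p.2 rfl
  · ext x
    simp only [SetLike.mem_coe, Set.mem_setOf_eq]
    constructor
    · intro hx
      have hle : Submodule.span (ZMod 2) (Set.range fun p : Fin L × Fin L => pChain p)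
          ≤ Aux.cycleSubmodule L := by
        rw [Submodule.span_le]
        rintro _ ⟨p, rfl⟩
        exact Aux.pChain_isCycle p
      exact hle hx
    · intro hx
      rw [Aux.repr x hx]
      exact Submodule.sum_mem _ fun p _ =>
        Submodule.smul_mem _ _ (Submodule.subset_span ⟨p, rfl⟩)
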